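/- Define f(α,t) = ∫_{-1}^{1} (1 - 2xt + t²)^{-α} dx for real α and real t with 0 < t < 1. Then for every fixed t ∈ (0,1), the function α ↦ f(α,t) is differentiable on ℝ \ {1} and satisfies the differential equation ∂_α f(α,t) + f(α,t)/(α-1) = -(1/((α-1)t)) · [ log(1-t)·(1-t)^{-(2α-2)} - log(1+t)·(1+t)^{-(2α-2)} ] for all α ≠ 1. -/

import Mathlib

/-!
For `α ≠ 1` the integrand has the elementary antiderivative `(1 - 2xt + t²)^{1-α}`, which gives
`f(α, t) = u(α) / (1 - α)` with `u(α) = ((1 + t)^{2-2α} - (1 - t)^{2-2α}) / (2t)`.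
Differentiating `(1 - α) f(α, t) = u(α)` in `α` gives `(1 - α) ∂_α f - f = u'(α)`, which is the
differential equation.
-/

open MeasureTheory Real

/-- `f α t = ∫_{-1}^1 (1 - 2xt + t²)^{-α} dx`. -/
noncomputable def genIntegral (α t : ℝ) : ℝ :=
  ∫ x in (-1:ℝ)..1, (1 - 2 * x * t + t ^ 2) ^ (-α)

theorem intervalIntegral.integral_mul_add_rpow {a b c d r : ℝ} (hc : c ≠ 0) (hr : r ≠ -1)
    (h0 : (0 : ℝ) ∉ Set.uIcc (c * a + d) (c * b + d)) :
    ∫ x in a..b, (c * x + d) ^ r = ((c * b + d) ^ (r + 1) - (c * a + d) ^ (r + 1)) / (c * (r + 1)) := by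
  have hr' : r + 1 ≠ 0 := fun h => hr (by linarith)
  rw [intervalIntegral.integral_comp_mul_add (· ^ r) hc, integral_rpow (Or.inr ⟨hr, h0⟩),
    smul_eq_mul]
  field_simp

theorem HasDerivAt.div_one_sub {u : ℝ → ℝ} {u' α : ℝ} (hu : HasDerivAt u u' α) (hα : α ≠ 1) :
    HasDerivAt (fun β => u β / (1 - β)) ((u' + u α / (1 - α)) / (1 - α)) α := by
  have h1α : 1 - α ≠ 0 := sub_ne_zero.2 hα.symm
  refine (hu.div ((hasDerivAt_id α).const_sub 1) h1α).congr_deriv ?_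
  simp only [id]
  field_simp
  ring

section

variable {t : ℝ}

theorem genIntegral_eq (ht0 : 0 < t) (ht1 : t < 1) {α : ℝ} (hα : α ≠ 1) :
    genIntegral α t = ((1 + t) ^ (2 - 2 * α) - (1 - t) ^ (2 - 2 * α)) / (2 * t) / (1 - α) := by
  have h1α : -α + 1 ≠ 0 := by contrapose! hα; linarith
  have hsq (s : ℝ) (hs : 0 ≤ s) : (s ^ 2) ^ (-α + 1) = s ^ (2 - 2 * α) := by
    rw [← Real.rpow_natCast_mul hs]
    norm_num
    ring_nf
  have haffine : genIntegral α t = ∫ x in (-1:ℝ)..1, (-2 * t * x + (1 + t ^ 2)) ^ (-α) := by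
    simp only [genIntegral]
    congr 1 with x
    ring_nf
  have hlo : -2 * t * -1 + (1 + t ^ 2) = (1 + t) ^ 2 := by ring
  have hhi : -2 * t * 1 + (1 + t ^ 2) = (1 - t) ^ 2 := by ring
  have h0 : (0 : ℝ) ∉ Set.uIcc ((1 + t) ^ 2) ((1 - t) ^ 2) :=
    Set.notMem_uIcc_of_lt (by positivity) (by nlinarith)
  rw [haffine, intervalIntegral.integral_mul_add_rpow (by positivity) (by contrapose! h1α; linarith)
    (by rwa [hlo, hhi]), hlo, hhi, hsq _ (by linarith), hsq _ (by linarith)]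
  field_simp
  ring

theorem hasDerivAt_genIntegral (ht0 : 0 < t) (ht1 : t < 1) {α : ℝ} (hα : α ≠ 1) :
    HasDerivAt (fun β => genIntegral β t)
      (((Real.log (1 - t) * (1 - t) ^ (2 - 2 * α) - Real.log (1 + t) * (1 + t) ^ (2 - 2 * α)) / t
        + genIntegral α t) / (1 - α)) α := by
  have hexp : HasDerivAt (fun β : ℝ => 2 - 2 * β) (-2) α := by
    simpa using ((hasDerivAt_id α).const_mul 2).const_sub 2
  have hu := (((hexp.const_rpow (by linarith : (0:ℝ) < 1 + t)).sub
    (hexp.const_rpow (by linarith : (0:ℝ) < 1 - t))).div_const (2 * t)).div_one_sub hα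
  simp only [Pi.sub_apply, ← genIntegral_eq ht0 ht1 hα] at hu
  refine (hu.congr_of_eventuallyEq ?_).congr_deriv ?_
  · filter_upwards [eventually_ne_nhds hα] with β hβ using genIntegral_eq ht0 ht1 hβ
  · field_simp
    ring

end

theorem genIntegral_alpha_ODE (t : ℝ) (ht0 : 0 < t) (ht1 : t < 1) :
    ∀ α : ℝ, α ≠ 1 →
      DifferentiableAt ℝ (fun β => genIntegral β t) α ∧
      deriv (fun β => genIntegral β t) α + genIntegral α t / (α - 1) =
        -(1 / ((α - 1) * t)) *
          (Real.log (1 - t) * (1 - t) ^ (-(2 * α - 2)) -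
            Real.log (1 + t) * (1 + t) ^ (-(2 * α - 2))) := by
  intro α hα
  have hf := hasDerivAt_genIntegral ht0 ht1 hα
  refine ⟨hf.differentiableAt, ?_⟩
  have hα1 : α - 1 ≠ 0 := sub_ne_zero.2 hα
  have h1α : 1 - α ≠ 0 := sub_ne_zero.2 hα.symm
  rw [hf.deriv, show -(2 * α - 2) = 2 - 2 * α by ring]
  field_simp
  ring
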